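/- Ciphertext indistinguishability for the entanglement-based scheme with t−1 extra public-key copies (completion of Theorem 6 of [Pan10]): for n ≥ 1 and t ≥ 1, (1/2)·‖ (1/2^{n−1}) Σ_{k ∈ Ω_n} ( (ρ_k^0 − ρ_k^1) ⊗ (ρ_k^0)^{⊗(t−1)} ) ‖_tr ≤ √(2^t / 2^{n−1}) (equivalently, at most √(1/2^{n−t−1})), where the tensor product of the difference with t−1 copies means the tensor product over Fin t of the family whose first slot is ρ_k^0 (resp. ρ_k^1) and remaining slots are ρ_k^0, subtracted. -/

import Mathlib

open Matrix Finset ComplexOrder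

/-- Hamming weight of a bit string. -/
def hammingW {n : ℕ} (ν : Fin n → ZMod 2) : ℕ :=
  (Finset.univ.filter fun l => ν l = 1).card

/-- `Ω_n`: the bit strings of length `n` with odd Hamming weight. -/
def Omega (n : ℕ) : Finset (Fin n → ZMod 2) :=
  Finset.univ.filter fun k => Odd (hammingW k)

/-- The public-key state `ρ_k^0`. -/
noncomputable def rho0 (n : ℕ) (k : Fin n → ZMod 2) :
    Matrix (Fin n → ZMod 2) (Fin n → ZMod 2) ℂ :=
  (1 / 2 ^ n : ℂ) •
    ∑ i : Fin n → ZMod 2, ∑ x : ZMod 2, Matrix.single i (i + x • k) (1 : ℂ)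

/-- The ciphertext state `ρ_k^1` of the bit `1`. -/
noncomputable def rho1 (n : ℕ) (k : Fin n → ZMod 2) :
    Matrix (Fin n → ZMod 2) (Fin n → ZMod 2) ℂ :=
  (1 / 2 ^ n : ℂ) •
    ∑ i : Fin n → ZMod 2, ∑ x : ZMod 2,
      ((-1 : ℂ) ^ x.val) • Matrix.single i (i + x • k) (1 : ℂ)

/-- Tensor product of a `t`-indexed family of matrices over index type `m`. -/
def tensT {t : ℕ} {m : Type*} [Fintype m] (ρ : Fin t → Matrix m m ℂ) :
    Matrix (Fin t → m) (Fin t → m) ℂ :=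
  Matrix.of fun u v => ∏ s, ρ s (u s) (v s)

/-- `|A|` is the positive semidefinite square root of `AᴴA`. -/
noncomputable def matAbs {m : Type*} [Fintype m] [DecidableEq m] (A : Matrix m m ℂ) :
    Matrix m m ℂ :=
  (Matrix.posSemidef_conjTranspose_mul_self A).1.eigenvectorUnitary.1 *
    Matrix.diagonal ((↑) ∘ (√·) ∘ (Matrix.posSemidef_conjTranspose_mul_self A).1.eigenvalues) *
    (star (Matrix.posSemidef_conjTranspose_mul_self A).1.eigenvectorUnitary : Matrix m m ℂ)

/-- The trace norm `‖A‖_tr = tr |A|` (a real number). -/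
noncomputable def traceNorm {m : Type*} [Fintype m] [DecidableEq m] (A : Matrix m m ℂ) : ℝ :=
  (matAbs A).trace.re

/-!
The trace norm of an `N × N` matrix is at most `√N` times its Frobenius norm: apply
Cauchy–Schwarz to the diagonal of `|A|`, whose Frobenius norm equals that of `A` since
`|A|² = AᴴA`. The `(u, v)` entry of the `k`-th summand is `2^{1-n} · 2^{-n(t-1)}` times the
indicator that `v - u` is `k` in the distinguished slot and `0` or `k` in every other slot.
Hence at most one key contributes to each entry, and the squared Frobenius norm is that
constant squared times `2^{nt} · |Ω_n| · 2^{t-1}`, where `|Ω_n| ≤ 2^{n-1}` because flipping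
one bit maps `Ω_n` injectively into its complement.
-/

section TraceNorm

variable {m : Type*} [Fintype m]

lemma re_trace_conjTranspose_mul_self {n : Type*} [Fintype n] (A : Matrix m n ℂ) :
    (Aᴴ * A).trace.re = ∑ i, ∑ j, ‖A i j‖ ^ 2 := by
  simp only [trace, Matrix.diag, Matrix.mul_apply, conjTranspose_apply, Complex.re_sum]
  rw [Finset.sum_comm]
  simp [← Complex.normSq_eq_norm_sq, Complex.normSq_apply]

variable [DecidableEq m]

lemma matAbs_conjTranspose (A : Matrix m m ℂ) : (matAbs A)ᴴ = matAbs A := by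
  simp [matAbs, conjTranspose_mul, Matrix.mul_assoc, Matrix.star_eq_conjTranspose,
    Function.comp_def, Pi.star_def]

lemma matAbs_mul_self (A : Matrix m m ℂ) : matAbs A * matAbs A = Aᴴ * A := by
  set hA := (posSemidef_conjTranspose_mul_self A).1
  set U : Matrix m m ℂ := (hA.eigenvectorUnitary : Matrix m m ℂ)
  have hU : star U * U = 1 := Unitary.coe_star_mul_self hA.eigenvectorUnitary
  conv_rhs => rw [hA.spectral_theorem, Unitary.conjStarAlgAut_apply]
  calc matAbs A * matAbs A
      = U * (diagonal ((↑) ∘ (√·) ∘ hA.eigenvalues) * (star U * U) *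
          diagonal ((↑) ∘ (√·) ∘ hA.eigenvalues)) * star U := by
        simp only [matAbs, Matrix.mul_assoc]; rfl
    _ = _ := by
      rw [hU, Matrix.mul_one, diagonal_mul_diagonal]
      congr 3
      funext i
      simp [← Complex.ofReal_mul,
        Real.mul_self_sqrt ((posSemidef_conjTranspose_mul_self A).eigenvalues_nonneg i)]

lemma traceNorm_sq_le_card_mul (A : Matrix m m ℂ) :
    traceNorm A ^ 2 ≤ Fintype.card m * ∑ i, ∑ j, ‖A i j‖ ^ 2 := by
  set S := matAbs A
  have hS : ∑ i, ∑ j, ‖S i j‖ ^ 2 = ∑ i, ∑ j, ‖A i j‖ ^ 2 := by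
    rw [← re_trace_conjTranspose_mul_self, ← re_trace_conjTranspose_mul_self,
      matAbs_conjTranspose, matAbs_mul_self]
  have hdiag (i : m) : (S i i).re ^ 2 ≤ ∑ j, ‖S i j‖ ^ 2 :=
    calc (S i i).re ^ 2 ≤ ‖S i i‖ ^ 2 := by
          rw [← sq_abs]; gcongr; exact Complex.abs_re_le_norm _
      _ ≤ ∑ j, ‖S i j‖ ^ 2 :=
          single_le_sum (f := fun j => ‖S i j‖ ^ 2) (fun _ _ => by positivity) (mem_univ i)
  calc traceNorm A ^ 2 = (∑ i, (S i i).re) ^ 2 := by simp [traceNorm, trace, S]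
    _ ≤ Fintype.card m * ∑ i, (S i i).re ^ 2 := by
        simpa using sq_sum_le_card_mul_sum_sq (s := univ) (f := fun i => (S i i).re)
    _ ≤ Fintype.card m * ∑ i, ∑ j, ‖A i j‖ ^ 2 := by
        rw [← hS]; gcongr with i; exact hdiag i

end TraceNorm

section Omega

variable {n : ℕ}

lemma natCast_hammingW (k : Fin n → ZMod 2) : (hammingW k : ZMod 2) = ∑ l, k l := by
  rw [hammingW, ← Finset.sum_boole]
  refine Finset.sum_congr rfl fun l _ => ?_
  generalize k l = a
  revert a; decide

lemma mem_Omega_iff {k : Fin n → ZMod 2} : k ∈ Omega n ↔ ∑ l, k l = 1 := by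
  rw [Omega, mem_filter, ← natCast_hammingW, ZMod.natCast_eq_one_iff_odd]
  simp

lemma ne_zero_of_mem_Omega {k : Fin n → ZMod 2} (hk : k ∈ Omega n) : k ≠ 0 := by
  rintro rfl
  simp [mem_Omega_iff] at hk

lemma card_Omega_le (hn : 1 ≤ n) : #(Omega n) ≤ 2 ^ (n - 1) := by
  set e : Fin n → ZMod 2 := Pi.single ⟨0, hn⟩ 1
  have hflip : ∀ k ∈ Omega n, k + e ∈ (Omega n)ᶜ := by
    intro k hk
    rw [mem_Omega_iff] at hk
    rw [mem_compl, mem_Omega_iff]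
    simp [Finset.sum_add_distrib, hk, e]
  have hle : #(Omega n) ≤ #(Omega n)ᶜ :=
    card_le_card_of_injOn (· + e) hflip (add_left_injective e).injOn
  have htotal : #(Omega n) + #(Omega n)ᶜ = 2 ^ n := by
    simp [card_add_card_compl]
  have h2 : 2 ^ n = 2 * 2 ^ (n - 1) := by
    rw [← pow_succ']; congr 1; omega
  omega

end Omega

lemma tensT_sub_tensT_update_apply {t : ℕ} {m : Type*} [Fintype m]
    (ρ : Fin t → Matrix m m ℂ) (z : Fin t) (σ : Matrix m m ℂ) (u v : Fin t → m) :
    (tensT ρ - tensT (Function.update ρ z σ)) u v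
      = (ρ z - σ) (u z) (v z) * ∏ s ∈ univ.erase z, ρ s (u s) (v s) := by
  have hrest : ∏ s ∈ univ.erase z, Function.update ρ z σ s (u s) (v s)
      = ∏ s ∈ univ.erase z, ρ s (u s) (v s) :=
    prod_congr rfl fun s hs => by rw [Function.update_of_ne (ne_of_mem_erase hs)]
  simp only [Matrix.sub_apply, tensT, of_apply]
  rw [← mul_prod_erase univ _ (mem_univ z), ← mul_prod_erase univ _ (mem_univ z), hrest,
    Function.update_self, sub_mul]

section States

variable {n : ℕ}

lemma sum_zmod_two {M : Type*} [AddCommMonoid M] (f : ZMod 2 → M) :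
    ∑ x, f x = f 0 + f 1 :=
  Fin.sum_univ_two f

lemma rho0_apply (k a b : Fin n → ZMod 2) :
    rho0 n k a b = 1 / 2 ^ n * ((if b = a then 1 else 0) + (if b = a + k then 1 else 0)) := by
  simp only [rho0, Matrix.smul_apply, smul_eq_mul, Matrix.sum_apply]
  rw [sum_comm, sum_zmod_two]
  simp [single_apply, ite_and, eq_comm]

lemma rho1_apply (k a b : Fin n → ZMod 2) :
    rho1 n k a b = 1 / 2 ^ n * ((if b = a then 1 else 0) - (if b = a + k then 1 else 0)) := by
  simp only [rho1, Matrix.smul_apply, smul_eq_mul, Matrix.sum_apply]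
  rw [sum_comm, sum_zmod_two]
  simp [single_apply, ite_and, eq_comm, sub_eq_add_neg, ZMod.val_one, neg_ite]

lemma rho0_sub_rho1_apply (k a b : Fin n → ZMod 2) :
    (rho0 n k - rho1 n k) a b = 2 / 2 ^ n * if b = a + k then 1 else 0 := by
  rw [Matrix.sub_apply, rho0_apply, rho1_apply]
  ring

lemma rho0_apply_of_ne_zero {k : Fin n → ZMod 2} (hk : k ≠ 0) (a b : Fin n → ZMod 2) :
    rho0 n k a b = 1 / 2 ^ n * if b = a ∨ b = a + k then 1 else 0 := by
  rw [rho0_apply]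
  by_cases h : b = a
  · simp [h, hk]
  · simp [h]

end States

section Shift

variable {n t : ℕ}

def IsShift (z : Fin t) (k : Fin n → ZMod 2) (u v : Fin t → Fin n → ZMod 2) : Prop :=
  v z = u z + k ∧ ∀ s ≠ z, v s = u s ∨ v s = u s + k

instance (z : Fin t) (k : Fin n → ZMod 2) (u v : Fin t → Fin n → ZMod 2) :
    Decidable (IsShift z k u v) :=
  inferInstanceAs (Decidable (_ ∧ _))

lemma tensT_rho0_sub_update_rho1_apply (z : Fin t) {k : Fin n → ZMod 2} (hk : k ≠ 0)
    (u v : Fin t → Fin n → ZMod 2) :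
    (tensT (fun _ : Fin t => rho0 n k)
        - tensT (Function.update (fun _ => rho0 n k) z (rho1 n k))) u v
      = 2 / 2 ^ n * (1 / 2 ^ n) ^ (t - 1) * if IsShift z k u v then 1 else 0 := by
  rw [tensT_sub_tensT_update_apply, rho0_sub_rho1_apply,
    prod_congr rfl fun s _ => rho0_apply_of_ne_zero hk (u s) (v s), prod_mul_distrib,
    prod_const, card_erase_of_mem (mem_univ z), card_univ, Fintype.card_fin]
  by_cases h : IsShift z k u v
  · rw [if_pos h, if_pos h.1, prod_eq_one fun s hs => if_pos (h.2 s (ne_of_mem_erase hs))]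
    ring
  · rw [if_neg h]
    simp only [IsShift, not_and_or, not_forall] at h
    rcases h with h | ⟨s, hs, h⟩
    · rw [if_neg h]; ring
    · rw [prod_eq_zero (mem_erase.mpr ⟨hs, mem_univ s⟩) (if_neg h)]; ring

lemma eq_sub_of_isShift {z : Fin t} {k : Fin n → ZMod 2} {u v : Fin t → Fin n → ZMod 2}
    (h : IsShift z k u v) : k = v z - u z := by
  rw [h.1, add_sub_cancel_left]

lemma card_filter_isShift (z : Fin t) {k : Fin n → ZMod 2} (hk : k ≠ 0)
    (u : Fin t → Fin n → ZMod 2) : #{v | IsShift z k u v} = 2 ^ (t - 1) := by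
  have hpi : ({v | IsShift z k u v} : Finset (Fin t → Fin n → ZMod 2))
      = Fintype.piFinset fun s => if s = z then {u z + k} else {u s, u s + k} := by
    ext v
    rw [mem_filter, Fintype.mem_piFinset]
    simp only [IsShift, mem_univ, true_and]
    constructor
    · rintro ⟨hz, hs⟩ s
      by_cases h : s = z
      · subst h; simp [hz]
      · simpa [h] using hs s h
    · intro h
      exact ⟨by simpa using h z, fun s hs => by simpa [hs] using h s⟩
  have hpair (a : Fin n → ZMod 2) : #{a, a + k} = 2 :=
    card_pair fun h => hk (left_eq_add.mp h)
  rw [hpi, Fintype.card_piFinset, ← mul_prod_erase univ _ (mem_univ z),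
    prod_congr rfl fun s hs => by rw [if_neg (ne_of_mem_erase hs), hpair]]
  simp [card_erase_of_mem]

end Shift

section Frobenius

variable {n t : ℕ}

lemma sum_Omega_tensT_apply (z : Fin t) (u v : Fin t → Fin n → ZMod 2) :
    (∑ k ∈ Omega n, (tensT (fun _ : Fin t => rho0 n k)
        - tensT (Function.update (fun _ => rho0 n k) z (rho1 n k)))) u v
      = 2 / 2 ^ n * (1 / 2 ^ n) ^ (t - 1) * #{k ∈ Omega n | IsShift z k u v} := by
  rw [Matrix.sum_apply, sum_congr rfl fun k hk =>
    tensT_rho0_sub_update_rho1_apply z (ne_zero_of_mem_Omega hk) u v, ← mul_sum, sum_boole]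

lemma card_filter_Omega_isShift_le_one (z : Fin t) (u v : Fin t → Fin n → ZMod 2) :
    #{k ∈ Omega n | IsShift z k u v} ≤ 1 :=
  card_le_one.mpr fun _ ha _ hb =>
    (eq_sub_of_isShift (mem_filter.1 ha).2).trans (eq_sub_of_isShift (mem_filter.1 hb).2).symm

lemma sum_card_filter_Omega_isShift (z : Fin t) (u : Fin t → Fin n → ZMod 2) :
    ∑ v, #{k ∈ Omega n | IsShift z k u v} = #(Omega n) * 2 ^ (t - 1) := by
  simp only [card_filter]
  rw [sum_comm, ← smul_eq_mul, ← sum_const]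
  refine sum_congr rfl fun k hk => ?_
  rw [← card_filter, card_filter_isShift z (ne_zero_of_mem_Omega hk)]

lemma sum_norm_sq_sum_Omega_tensT_apply (z : Fin t) :
    ∑ u, ∑ v, ‖(∑ k ∈ Omega n, (tensT (fun _ : Fin t => rho0 n k)
        - tensT (Function.update (fun _ => rho0 n k) z (rho1 n k)))) u v‖ ^ 2
      = (2 / 2 ^ n * (1 / 2 ^ n) ^ (t - 1)) ^ 2 * ((2 ^ n) ^ t * (#(Omega n) * 2 ^ (t - 1))) := by
  have hsq (N : ℕ) (hN : N ≤ 1) : (N : ℝ) ^ 2 = N := by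
    interval_cases N <;> norm_num
  simp_rw [sum_Omega_tensT_apply, norm_mul, Complex.norm_natCast, mul_pow,
    fun u v => hsq _ (card_filter_Omega_isShift_le_one z u v), ← mul_sum, ← Nat.cast_sum,
    sum_card_filter_Omega_isShift, sum_const, card_univ]
  simp [mul_assoc]

lemma sum_norm_sq_smul_sum_Omega_tensT_apply_le (hn : 1 ≤ n) (z : Fin t) :
    (2 ^ n) ^ t * ∑ u, ∑ v, ‖((1 / 2 ^ (n - 1) : ℂ) • ∑ k ∈ Omega n,
        (tensT (fun _ : Fin t => rho0 n k)
          - tensT (Function.update (fun _ => rho0 n k) z (rho1 n k)))) u v‖ ^ 2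
      ≤ 2 * (2 ^ t / 2 ^ (n - 1)) := by
  simp_rw [Matrix.smul_apply, smul_eq_mul, norm_mul, mul_pow, ← mul_sum,
    sum_norm_sq_sum_Omega_tensT_apply]
  have hΩ : (#(Omega n) : ℝ) ≤ 2 ^ (n - 1) := by exact_mod_cast card_Omega_le hn
  obtain ⟨a, rfl⟩ := Nat.exists_eq_add_of_le' hn
  obtain ⟨b, rfl⟩ : ∃ b, t = b + 1 := ⟨t - 1, by have := z.pos; omega⟩
  have hnorm : ‖(1 / 2 ^ a : ℂ)‖ = 1 / 2 ^ a := by simp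
  simp only [Nat.add_sub_cancel, hnorm] at hΩ ⊢
  calc _ = 4 * 2 ^ b / 2 ^ a * ((#(Omega (a + 1)) : ℝ) / 2 ^ a) := by
        simp only [one_div, inv_pow, ← pow_mul]; field_simp; ring
    _ ≤ 4 * 2 ^ b / 2 ^ a * (1 : ℝ) := by gcongr; rwa [div_le_one (by positivity)]
    _ = _ := by ring

end Frobenius

/-- Ciphertext indistinguishability for the entanglement-based scheme with `t − 1`
extra public-key copies. -/
theorem ciphertext_indistinguishability (n t : ℕ) (hn : 1 ≤ n) (ht : 1 ≤ t) :
    (1 / 2) * traceNorm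
        ((1 / 2 ^ (n - 1) : ℂ) • ∑ k ∈ Omega n,
          (tensT (fun _ : Fin t => rho0 n k)
            - tensT (fun s : Fin t => if s.val = 0 then rho1 n k else rho0 n k)))
      ≤ Real.sqrt (2 ^ t / 2 ^ (n - 1)) := by
  have hslot (k : Fin n → ZMod 2) : (fun s : Fin t => if s.val = 0 then rho1 n k else rho0 n k)
      = Function.update (fun _ => rho0 n k) ⟨0, ht⟩ (rho1 n k) := by
    funext s
    simp [Function.update_apply, Fin.ext_iff]
  simp only [hslot]
  set M := (1 / 2 ^ (n - 1) : ℂ) • ∑ k ∈ Omega n, (tensT (fun _ : Fin t => rho0 n k)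
    - tensT (Function.update (fun _ => rho0 n k) ⟨0, ht⟩ (rho1 n k)))
  have hcard : (Fintype.card (Fin t → Fin n → ZMod 2) : ℝ) = (2 ^ n) ^ t := by simp
  refine (le_abs_self _).trans (Real.abs_le_sqrt ?_)
  calc (1 / 2 * traceNorm M) ^ 2 = traceNorm M ^ 2 / 4 := by ring
    _ ≤ (2 ^ n) ^ t * (∑ u, ∑ v, ‖M u v‖ ^ 2) / 4 := by
        rw [← hcard]; gcongr; exact traceNorm_sq_le_card_mul M
    _ ≤ 2 * (2 ^ t / 2 ^ (n - 1)) / 4 := by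
        gcongr ?_ / _; exact sum_norm_sq_smul_sum_Omega_tensT_apply_le hn ⟨0, ht⟩
    _ ≤ 2 ^ t / 2 ^ (n - 1) := by linarith [show (0 : ℝ) ≤ 2 ^ t / 2 ^ (n - 1) by positivity]
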